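/- For any constants c₁, c₂ ∈ ℝ, the function f₁(r) = c₁(r+2)³/r² + c₂(r³ + 10r² + 40r)/(r+2)² solves the radial ODE f₁'' + (2/r)f₁' − (2/r²)f₁ + (3/r)(1+r/2)⁻² f₁ = 0 on r > 0. -/

import Mathlib

noncomputable section

def f₁ (c₁ c₂ : ℝ) (r : ℝ) : ℝ :=
  c₁ * (r + 2) ^ 3 / r ^ 2 + c₂ * (r ^ 3 + 10 * r ^ 2 + 40 * r) / (r + 2) ^ 2

variable (c₁ c₂ : ℝ) {r : ℝ}

def f₁' (r : ℝ) : ℝ :=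
  c₁ * (r ^ 3 - 12 * r - 16) / r ^ 3 + c₂ * (r ^ 3 + 6 * r ^ 2 + 80) / (r + 2) ^ 3

def f₁'' (r : ℝ) : ℝ :=
  c₁ * (24 * (r + 2)) / r ^ 4 + c₂ * (24 * (r - 10)) / (r + 2) ^ 4

theorem hasDerivAt_f₁ (hr : r ≠ 0) (hr₂ : r + 2 ≠ 0) :
    HasDerivAt (f₁ c₁ c₂) (f₁' c₁ c₂ r) r := by
  have x := hasDerivAt_id' r
  have h₁ := (((x.add_const 2).fun_pow 3).const_mul c₁).fun_div (x.fun_pow 2) (pow_ne_zero 2 hr)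
  have h₂ := ((((x.fun_pow 3).fun_add ((x.fun_pow 2).const_mul 10)).fun_add
    (x.const_mul 40)).const_mul c₂).fun_div ((x.add_const 2).fun_pow 2) (pow_ne_zero 2 hr₂)
  refine (h₁.fun_add h₂).congr_deriv ?_
  rw [f₁']
  field_simp
  ring

theorem hasDerivAt_f₁' (hr : r ≠ 0) (hr₂ : r + 2 ≠ 0) :
    HasDerivAt (f₁' c₁ c₂) (f₁'' c₁ c₂ r) r := by
  have x := hasDerivAt_id' r
  have h₁ := ((((x.fun_pow 3).fun_sub (x.const_mul 12)).sub_const 16).const_mul c₁).fun_div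
    (x.fun_pow 3) (pow_ne_zero 3 hr)
  have h₂ := ((((x.fun_pow 3).fun_add ((x.fun_pow 2).const_mul 6)).add_const 80).const_mul
    c₂).fun_div ((x.add_const 2).fun_pow 3) (pow_ne_zero 3 hr₂)
  refine (h₁.fun_add h₂).congr_deriv ?_
  rw [f₁'']
  field_simp
  ring

theorem deriv_deriv_f₁ (hr : r ≠ 0) (hr₂ : r + 2 ≠ 0) :
    deriv (deriv (f₁ c₁ c₂)) r = f₁'' c₁ c₂ r := by
  have h : deriv (f₁ c₁ c₂) =ᶠ[nhds r] f₁' c₁ c₂ := by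
    filter_upwards [eventually_ne_nhds hr,
      (continuous_add_const 2).continuousAt.eventually_ne hr₂] with y hy hy₂
    exact (hasDerivAt_f₁ c₁ c₂ hy hy₂).deriv
  rw [h.deriv_eq]
  exact (hasDerivAt_f₁' c₁ c₂ hr hr₂).deriv

theorem stmt_10 (c₁ c₂ : ℝ) :
    ∀ r : ℝ, 0 < r →
      deriv (deriv (f₁ c₁ c₂)) r + (2 / r) * deriv (f₁ c₁ c₂) r
        - (2 / r ^ 2) * f₁ c₁ c₂ r + (3 / r) * ((1 + r / 2)⁻¹) ^ 2 * f₁ c₁ c₂ r = 0 := by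
  intro r hr
  have hr₂ : r + 2 ≠ 0 := by positivity
  rw [deriv_deriv_f₁ c₁ c₂ hr.ne' hr₂, (hasDerivAt_f₁ c₁ c₂ hr.ne' hr₂).deriv]
  simp only [f₁, f₁', f₁'']
  field_simp
  ring
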